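/- Let K = L²([0,1]) (with Lebesgue measure) and for s > 0 let R_s = {f ∈ L²([0,1]) : there exists g ∈ L²([0,1]) with f(x) = x^s g(x) for almost every x ∈ [0,1]}, i.e. R_s is the range of the multiplication operator M_{x^s}. Then for all positive real numbers s and t, R_s and R_t are unitarily equivalent: there exists a unitary operator (surjective linear isometry) U : L²([0,1]) → L²([0,1]) with U(R_s) = R_t. -/

import Mathlib

noncomputable section

open MeasureTheory

abbrev μ01 : Measure ℝ := volume.restrict (Set.Icc (0 : ℝ) 1)

abbrev L2 : Type := Lp ℂ 2 μ01

/-- The range R_s of the multiplication operator M_{x^s} on L²([0,1]). -/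
def mulPowRange (s : ℝ) : Submodule ℂ L2 where
  carrier := {f | ∃ g : L2, ∀ᵐ x ∂μ01, (f : ℝ → ℂ) x = ((x ^ s : ℝ) : ℂ) * (g : ℝ → ℂ) x}
  zero_mem' := by
    refine ⟨0, ?_⟩
    filter_upwards [Lp.coeFn_zero ℂ 2 μ01] with x hx
    rw [hx]
    simp
  add_mem' := by
    rintro f₁ f₂ ⟨g₁, hg₁⟩ ⟨g₂, hg₂⟩
    refine ⟨g₁ + g₂, ?_⟩
    filter_upwards [hg₁, hg₂, Lp.coeFn_add f₁ f₂, Lp.coeFn_add g₁ g₂] with x h1 h2 h3 h4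
    simp only [h3, h4, Pi.add_apply, h1, h2]
    ring
  smul_mem' := by
    rintro c f ⟨g, hg⟩
    refine ⟨c • g, ?_⟩
    filter_upwards [hg, Lp.coeFn_smul c f, Lp.coeFn_smul c g] with x h1 h2 h3
    simp only [h2, h3, Pi.smul_apply, h1, smul_eq_mul]
    ring

/-! The substitution `x ↦ x ^ r` (`r > 0`) maps `(0, 1]` bijectively onto itself with Jacobian
`r x ^ (r - 1)`, so `f ↦ √(r x ^ (r - 1)) f(x ^ r)` is a unitary of `L²([0, 1])`, inverted by the
same construction for `r⁻¹`. It sends `x ^ a g(x)` to `x ^ (a r)` times the image of `g`, hence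
carries `R_a` onto `R_(a r)`; the theorem is the case `r = t / s`. -/

open Real Set
open scoped ENNReal

theorem Real.rpow_image_Ioc_zero_one {r : ℝ} (hr : 0 < r) :
    (· ^ r) '' Ioc (0 : ℝ) 1 = Ioc 0 1 := by
  ext y
  constructor
  · rintro ⟨x, ⟨hx0, hx1⟩, rfl⟩
    exact ⟨rpow_pos_of_pos hx0 r, rpow_le_one hx0.le hx1 hr.le⟩
  · rintro ⟨hy0, hy1⟩
    exact ⟨y ^ r⁻¹, ⟨rpow_pos_of_pos hy0 _, rpow_le_one hy0.le hy1 (inv_pos.mpr hr).le⟩,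
      rpow_inv_rpow hy0.le hr.ne'⟩

theorem lintegral_μ01_comp_rpow {r : ℝ} (hr : 0 < r) (g : ℝ → ℝ≥0∞) :
    ∫⁻ x, ENNReal.ofReal (r * x ^ (r - 1)) * g (x ^ r) ∂μ01 = ∫⁻ x, g x ∂μ01 := by
  have hderiv : ∀ x ∈ Ioc (0 : ℝ) 1, HasDerivWithinAt (· ^ r) (r * x ^ (r - 1)) (Ioc 0 1) x :=
    fun x hx => (hasDerivAt_rpow_const (Or.inl hx.1.ne')).hasDerivWithinAt
  have hinj : InjOn (· ^ r) (Ioc (0 : ℝ) 1) :=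
    (rpow_left_injOn hr.ne').mono fun x hx => hx.1.le
  calc ∫⁻ x, ENNReal.ofReal (r * x ^ (r - 1)) * g (x ^ r) ∂μ01
      = ∫⁻ x in Ioc 0 1, ENNReal.ofReal |r * x ^ (r - 1)| * g (x ^ r) := by
        rw [setLIntegral_congr Ioc_ae_eq_Icc.symm]
        refine setLIntegral_congr_fun measurableSet_Ioc fun x hx => ?_
        rw [abs_of_pos (mul_pos hr (rpow_pos_of_pos hx.1 _))]
    _ = ∫⁻ x in (· ^ r) '' Ioc 0 1, g x :=
        (lintegral_image_eq_lintegral_abs_deriv_mul measurableSet_Ioc hderiv hinj g).symm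
    _ = ∫⁻ x, g x ∂μ01 := by
        rw [Real.rpow_image_Ioc_zero_one hr, setLIntegral_congr Ioc_ae_eq_Icc]

theorem map_rpow_μ01 {r : ℝ} (hr : 0 < r) :
    μ01.map (· ^ r) = μ01.withDensity fun y => ENNReal.ofReal (r⁻¹ * y ^ (r⁻¹ - 1)) := by
  ext A hA
  have hmeas : Measurable fun x : ℝ => x ^ r := measurable_id.pow_const r
  rw [Measure.map_apply hmeas hA, withDensity_apply _ hA, ← lintegral_indicator_one (hmeas hA),
    ← lintegral_μ01_comp_rpow (inv_pos.mpr hr), ← lintegral_indicator hA]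
  refine setLIntegral_congr_fun measurableSet_Icc fun x hx => ?_
  have hxA : x ^ r⁻¹ ∈ (· ^ r) ⁻¹' A ↔ x ∈ A := by rw [mem_preimage, rpow_inv_rpow hx.1 hr.ne']
  by_cases h : x ∈ A <;> simp [hxA, h]

theorem quasiMeasurePreserving_rpow_μ01 {r : ℝ} (hr : 0 < r) :
    Measure.QuasiMeasurePreserving (· ^ r) μ01 μ01 :=
  ⟨measurable_id.pow_const r, by rw [map_rpow_μ01 hr]; exact withDensity_absolutelyContinuous _ _⟩

def rpowSubst (r : ℝ) (f : ℝ → ℂ) (x : ℝ) : ℂ :=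
  (√(r * x ^ (r - 1)) : ℂ) * f (x ^ r)

section rpowSubst

variable {r : ℝ}

theorem rpowSubst_congr_ae (hr : 0 < r) {f g : ℝ → ℂ} (h : f =ᵐ[μ01] g) :
    rpowSubst r f =ᵐ[μ01] rpowSubst r g := by
  filter_upwards [(quasiMeasurePreserving_rpow_μ01 hr).ae_eq h] with x hx
  simp only [rpowSubst, Function.comp_apply] at hx ⊢
  rw [hx]

theorem aestronglyMeasurable_rpowSubst (hr : 0 < r) {f : ℝ → ℂ}
    (hf : AEStronglyMeasurable f μ01) : AEStronglyMeasurable (rpowSubst r f) μ01 :=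
  (Complex.measurable_ofReal.comp
      ((measurable_const.mul (measurable_id.pow_const _)).sqrt)).aestronglyMeasurable.mul
    (hf.comp_quasiMeasurePreserving (quasiMeasurePreserving_rpow_μ01 hr))

theorem eLpNorm_rpowSubst (hr : 0 < r) (f : ℝ → ℂ) :
    eLpNorm (rpowSubst r f) 2 μ01 = eLpNorm f 2 μ01 := by
  have hpow : ∀ᵐ x ∂μ01, ‖rpowSubst r f x‖ₑ ^ (2 : ℝ) =
      ENNReal.ofReal (r * x ^ (r - 1)) * ‖f (x ^ r)‖ₑ ^ (2 : ℝ) := by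
    filter_upwards [ae_restrict_mem measurableSet_Icc] with x hx
    have hw : 0 ≤ r * x ^ (r - 1) := by have := hx.1; positivity
    rw [rpowSubst, enorm_mul, ENNReal.mul_rpow_of_nonneg _ _ zero_le_two, ← ofReal_norm,
      Complex.norm_real, norm_of_nonneg (sqrt_nonneg _),
      ENNReal.ofReal_rpow_of_nonneg (sqrt_nonneg _) zero_le_two, rpow_two, sq_sqrt hw]
  rw [eLpNorm_eq_lintegral_rpow_enorm_toReal two_ne_zero ENNReal.ofNat_ne_top,
    eLpNorm_eq_lintegral_rpow_enorm_toReal two_ne_zero ENNReal.ofNat_ne_top, ENNReal.toReal_ofNat,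
    lintegral_congr_ae hpow, lintegral_μ01_comp_rpow hr fun y => ‖f y‖ₑ ^ (2 : ℝ)]

theorem memLp_rpowSubst (hr : 0 < r) {f : ℝ → ℂ} (hf : MemLp f 2 μ01) :
    MemLp (rpowSubst r f) 2 μ01 :=
  ⟨aestronglyMeasurable_rpowSubst hr hf.1, by rw [eLpNorm_rpowSubst hr]; exact hf.2⟩

theorem rpowSubst_inv_rpowSubst (hr : 0 < r) (f : ℝ → ℂ) :
    rpowSubst r⁻¹ (rpowSubst r f) =ᵐ[μ01] f := by
  have hIoc : ∀ᵐ x ∂μ01, x ∈ Ioc (0 : ℝ) 1 := by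
    simpa only [Measure.restrict_congr_set Ioc_ae_eq_Icc] using
      ae_restrict_mem (μ := volume) (measurableSet_Ioc (a := (0 : ℝ)) (b := 1))
  filter_upwards [hIoc] with x hx
  have hw : 0 ≤ r⁻¹ * x ^ (r⁻¹ - 1) := by have := hx.1.le; positivity
  -- the Jacobians of `x ↦ x ^ r` and of its inverse `x ↦ x ^ r⁻¹`
  have hweights : (r⁻¹ * x ^ (r⁻¹ - 1)) * (r * (x ^ r⁻¹) ^ (r - 1)) = 1 := by
    rw [← rpow_mul hx.1.le, mul_mul_mul_comm, inv_mul_cancel₀ hr.ne', ← rpow_add hx.1,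
      show r⁻¹ - 1 + r⁻¹ * (r - 1) = 0 by field_simp; ring, rpow_zero, one_mul]
  calc rpowSubst r⁻¹ (rpowSubst r f) x
      = ((√(r⁻¹ * x ^ (r⁻¹ - 1) * (r * (x ^ r⁻¹) ^ (r - 1))) : ℝ) : ℂ) * f ((x ^ r⁻¹) ^ r) := by
        rw [sqrt_mul hw]; simp only [rpowSubst]; push_cast; ring
    _ = f x := by rw [hweights, sqrt_one, rpow_inv_rpow hx.1.le hr.ne']; simp

end rpowSubst

def rpowSubstL2 {r : ℝ} (hr : 0 < r) (f : L2) : L2 :=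
  (memLp_rpowSubst hr (Lp.memLp f)).toLp _

section rpowSubstL2

variable {r : ℝ} (hr : 0 < r)

theorem coeFn_rpowSubstL2 (f : L2) : rpowSubstL2 hr f =ᵐ[μ01] rpowSubst r f :=
  MemLp.coeFn_toLp _

theorem norm_rpowSubstL2 (f : L2) : ‖rpowSubstL2 hr f‖ = ‖f‖ := by
  rw [rpowSubstL2, Lp.norm_toLp, eLpNorm_rpowSubst hr, Lp.norm_def]

theorem rpowSubstL2_add (f g : L2) :
    rpowSubstL2 hr (f + g) = rpowSubstL2 hr f + rpowSubstL2 hr g := by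
  refine Lp.ext ?_
  filter_upwards [coeFn_rpowSubstL2 hr (f + g), coeFn_rpowSubstL2 hr f, coeFn_rpowSubstL2 hr g,
    Lp.coeFn_add (rpowSubstL2 hr f) (rpowSubstL2 hr g),
    rpowSubst_congr_ae hr (Lp.coeFn_add f g)] with x hfg hf hg hadd hcongr
  rw [hfg, hcongr, hadd, Pi.add_apply, hf, hg]
  simp only [rpowSubst, Pi.add_apply]
  ring

theorem rpowSubstL2_smul (c : ℂ) (f : L2) :
    rpowSubstL2 hr (c • f) = c • rpowSubstL2 hr f := by
  refine Lp.ext ?_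
  filter_upwards [coeFn_rpowSubstL2 hr (c • f), coeFn_rpowSubstL2 hr f,
    Lp.coeFn_smul c (rpowSubstL2 hr f), rpowSubst_congr_ae hr (Lp.coeFn_smul c f)]
    with x hcf hf hsmul hcongr
  rw [hcf, hcongr, hsmul, Pi.smul_apply, hf]
  simp only [rpowSubst, Pi.smul_apply, smul_eq_mul]
  ring

theorem rpowSubstL2_inv_rpowSubstL2 (f : L2) :
    rpowSubstL2 (inv_pos.mpr hr) (rpowSubstL2 hr f) = f :=
  Lp.ext <| (coeFn_rpowSubstL2 _ _).trans <|
    (rpowSubst_congr_ae (inv_pos.mpr hr) (coeFn_rpowSubstL2 hr f)).trans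
      (rpowSubst_inv_rpowSubst hr f)

theorem rpowSubstL2_rpowSubstL2_inv (f : L2) :
    rpowSubstL2 hr (rpowSubstL2 (inv_pos.mpr hr) f) = f := by
  simpa only [inv_inv] using rpowSubstL2_inv_rpowSubstL2 (inv_pos.mpr hr) f

def rpowSubstₗᵢ : L2 ≃ₗᵢ[ℂ] L2 where
  toFun := rpowSubstL2 hr
  invFun := rpowSubstL2 (inv_pos.mpr hr)
  map_add' := rpowSubstL2_add hr
  map_smul' := rpowSubstL2_smul hr
  left_inv := rpowSubstL2_inv_rpowSubstL2 hr
  right_inv := rpowSubstL2_rpowSubstL2_inv hr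
  norm_map' := norm_rpowSubstL2 hr

theorem rpowSubstL2_mem_mulPowRange {a : ℝ} {f : L2} (hf : f ∈ mulPowRange a) :
    rpowSubstL2 hr f ∈ mulPowRange (a * r) := by
  obtain ⟨g, hg⟩ := hf
  refine ⟨rpowSubstL2 hr g, ?_⟩
  filter_upwards [coeFn_rpowSubstL2 hr f, coeFn_rpowSubstL2 hr g, rpowSubst_congr_ae hr hg,
    ae_restrict_mem measurableSet_Icc] with x hf' hg' hcongr hx
  rw [hf', hcongr, hg']
  simp only [rpowSubst]
  rw [← rpow_mul hx.1, mul_comm r a]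
  ring

theorem rpowSubstₗᵢ_image_mulPowRange (a : ℝ) :
    rpowSubstₗᵢ hr '' (mulPowRange a : Set L2) = mulPowRange (a * r) := by
  refine (image_subset_iff.mpr fun f hf => rpowSubstL2_mem_mulPowRange hr hf).antisymm
    fun f hf => ⟨rpowSubstL2 (inv_pos.mpr hr) f, ?_, rpowSubstL2_rpowSubstL2_inv hr f⟩
  simpa only [SetLike.mem_coe, mul_inv_cancel_right₀ hr.ne'] using
    rpowSubstL2_mem_mulPowRange (inv_pos.mpr hr) hf

end rpowSubstL2

theorem ranges_of_multiplication_operators_unitarily_equivalent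
    (s t : ℝ) (hs : 0 < s) (ht : 0 < t) :
    ∃ U : L2 ≃ₗᵢ[ℂ] L2, U '' ((mulPowRange s) : Set L2) = ((mulPowRange t) : Set L2) :=
  ⟨rpowSubstₗᵢ (div_pos ht hs), by
    rw [rpowSubstₗᵢ_image_mulPowRange, mul_div_cancel₀ t hs.ne']⟩

end
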